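/- arXiv:2403.11664 — 4 statements merged into one kernel-verified Lean document; each statement's English description precedes it below -/
import Mathlib

section
/- Monotonicity of the cubic Hermite interpolant under the Fritsch–Carlson box condition: let x₀ < x₁, set h = x₁ − x₀ and Δ = (y₁ − y₀)/h, and let H be the cubic Hermite interpolant with values y₀, y₁ and slopes d₀, d₁ at x₀, x₁. If Δ ≥ 0 and 0 ≤ d₀ ≤ 3Δ and 0 ≤ d₁ ≤ 3Δ, then H is monotone non-decreasing on the interval [x₀, x₁]; if moreover Δ > 0, then H is strictly increasing on [x₀, x₁] and maps [x₀, x₁] bijectively onto [y₀, y₁]. -/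
private lemma fritschCarlson_aux (d₀ d₁ Δ u h : ℝ)
    (hΔ0 : 0 ≤ Δ) (hd₀0 : 0 ≤ d₀) (hd₀3 : d₀ ≤ 3 * Δ)
    (hd₁0 : 0 ≤ d₁) (hd₁3 : d₁ ≤ 3 * Δ) (hu0 : 0 ≤ u) (huh : u ≤ h) :
    0 ≤ d₀ * h ^ 2 + u * h * (6 * Δ - 4 * d₀ - 2 * d₁) + 3 * u ^ 2 * (d₀ + d₁ - 2 * Δ) := by
  rcases le_total (3 * u) h with hc | hc
  · nlinarith [mul_nonneg hd₀0 (mul_nonneg (by linarith : (0:ℝ) ≤ h - u)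
        (by linarith : (0:ℝ) ≤ h - 3 * u)),
      mul_nonneg (mul_nonneg (by linarith : (0:ℝ) ≤ 3 * Δ - d₁) hu0)
        (by linarith : (0:ℝ) ≤ 2 * h - 3 * u),
      mul_nonneg hΔ0 (sq_nonneg u)]
  · rcases le_total (3 * u) (2 * h) with hc2 | hc2
    · nlinarith [mul_nonneg (mul_nonneg (by linarith : (0:ℝ) ≤ 3 * Δ - d₀)
          (by linarith : (0:ℝ) ≤ h - u)) (by linarith : (0:ℝ) ≤ 3 * u - h),
        mul_nonneg (mul_nonneg (by linarith : (0:ℝ) ≤ 3 * Δ - d₁) hu0)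
          (by linarith : (0:ℝ) ≤ 2 * h - 3 * u),
        mul_nonneg hΔ0 (sq_nonneg (h - 2 * u))]
    · nlinarith [mul_nonneg (mul_nonneg (by linarith : (0:ℝ) ≤ 3 * Δ - d₀)
          (by linarith : (0:ℝ) ≤ h - u)) (by linarith : (0:ℝ) ≤ 3 * u - h),
        mul_nonneg hd₁0 (mul_nonneg hu0 (by linarith : (0:ℝ) ≤ 3 * u - 2 * h)),
        mul_nonneg hΔ0 (sq_nonneg (h - u))]

/-- Monotonicity of the cubic Hermite interpolant under the Fritsch–Carlson box
condition: with `Δ = (y₁ - y₀)/(x₁ - x₀)`, if `Δ ≥ 0`, `0 ≤ d₀ ≤ 3Δ` and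
`0 ≤ d₁ ≤ 3Δ`, then the cubic Hermite interpolant `H` is monotone non-decreasing on
`[x₀, x₁]`; if moreover `Δ > 0`, it is strictly increasing on `[x₀, x₁]` and maps
`[x₀, x₁]` bijectively onto `[y₀, y₁]`. -/
theorem cubicHermite_monotone_of_fritschCarlson (x₀ x₁ y₀ y₁ d₀ d₁ Δ : ℝ)
    (hx : x₀ < x₁) (hΔ : Δ = (y₁ - y₀) / (x₁ - x₀))
    (H : Polynomial ℝ) (hdeg : H.degree ≤ 3)
    (hv₀ : H.eval x₀ = y₀) (hv₁ : H.eval x₁ = y₁)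
    (hd₀ : H.derivative.eval x₀ = d₀) (hd₁ : H.derivative.eval x₁ = d₁)
    (hΔ0 : 0 ≤ Δ) (hd₀0 : 0 ≤ d₀) (hd₀3 : d₀ ≤ 3 * Δ)
    (hd₁0 : 0 ≤ d₁) (hd₁3 : d₁ ≤ 3 * Δ) :
    MonotoneOn (fun t => H.eval t) (Set.Icc x₀ x₁) ∧
      (0 < Δ → StrictMonoOn (fun t => H.eval t) (Set.Icc x₀ x₁) ∧
        Set.BijOn (fun t => H.eval t) (Set.Icc x₀ x₁) (Set.Icc y₀ y₁)) := by
  have hxne : (x₁ - x₀) ≠ 0 := sub_ne_zero.mpr hx.ne'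
  have hh : (0:ℝ) < x₁ - x₀ := sub_pos.mpr hx
  set a0 := H.coeff 0 with ha0
  set a1 := H.coeff 1 with ha1
  set a2 := H.coeff 2 with ha2
  set a3 := H.coeff 3 with ha3
  have hnd : H.natDegree < 4 :=
    lt_of_le_of_lt (Polynomial.natDegree_le_iff_degree_le.2 hdeg) (by norm_num)
  have hnd' : H.derivative.natDegree < 3 :=
    lt_of_le_of_lt (Polynomial.natDegree_derivative_le H)
      (by omega : H.natDegree - 1 < 3)
  have heval : ∀ t : ℝ, H.eval t = a0 + a1 * t + a2 * t ^ 2 + a3 * t ^ 3 := by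
    intro t
    rw [Polynomial.eval_eq_sum_range' hnd]
    simp only [Finset.sum_range_succ, Finset.sum_range_zero]
    ring
  have heval' : ∀ t : ℝ, H.derivative.eval t = a1 + 2 * a2 * t + 3 * a3 * t ^ 2 := by
    intro t
    rw [Polynomial.eval_eq_sum_range' hnd']
    simp only [Finset.sum_range_succ, Finset.sum_range_zero, Polynomial.coeff_derivative]
    push_cast
    ring
  have e0 : a0 + a1 * x₀ + a2 * x₀ ^ 2 + a3 * x₀ ^ 3 = y₀ := by rw [← heval]; exact hv₀
  have e1 : a0 + a1 * x₁ + a2 * x₁ ^ 2 + a3 * x₁ ^ 3 = y₁ := by rw [← heval]; exact hv₁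
  have e2 : a1 + 2 * a2 * x₀ + 3 * a3 * x₀ ^ 2 = d₀ := by rw [← heval']; exact hd₀
  have e3 : a1 + 2 * a2 * x₁ + 3 * a3 * x₁ ^ 2 = d₁ := by rw [← heval']; exact hd₁
  have hfΔ : a1 + a2 * (x₀ + x₁) + a3 * (x₀ ^ 2 + x₀ * x₁ + x₁ ^ 2) = Δ := by
    rw [hΔ, eq_div_iff hxne]
    linear_combination e1 - e0
  -- key derivative identity
  have hid : ∀ t : ℝ, (x₁ - x₀) ^ 2 * H.derivative.eval t =
      d₀ * (x₁ - x₀) ^ 2 + (t - x₀) * (x₁ - x₀) * (6 * Δ - 4 * d₀ - 2 * d₁) +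
        3 * (t - x₀) ^ 2 * (d₀ + d₁ - 2 * Δ) := by
    intro t
    rw [heval']
    linear_combination
      (((x₁ - x₀) ^ 2 - 4 * (t - x₀) * (x₁ - x₀) + 3 * (t - x₀) ^ 2) * e2 +
        (3 * (t - x₀) ^ 2 - 2 * (t - x₀) * (x₁ - x₀)) * e3 +
        (6 * (t - x₀) * (x₁ - x₀) - 6 * (t - x₀) ^ 2) * hfΔ)
  -- nonnegativity of the derivative on the interval
  have hderiv_nonneg : ∀ t ∈ Set.Icc x₀ x₁, 0 ≤ H.derivative.eval t := by
    intro t ht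
    obtain ⟨ht0, ht1⟩ := ht
    have hu0 : 0 ≤ t - x₀ := sub_nonneg.mpr ht0
    have huh : t - x₀ ≤ x₁ - x₀ := by linarith
    have key : 0 ≤ d₀ * (x₁ - x₀) ^ 2 + (t - x₀) * (x₁ - x₀) * (6 * Δ - 4 * d₀ - 2 * d₁) +
        3 * (t - x₀) ^ 2 * (d₀ + d₁ - 2 * Δ) :=
      fritschCarlson_aux d₀ d₁ Δ (t - x₀) (x₁ - x₀) hΔ0 hd₀0 hd₀3 hd₁0 hd₁3 hu0 huh
    have h2 : (0:ℝ) < (x₁ - x₀) ^ 2 := by positivity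
    have hmul : 0 ≤ (x₁ - x₀) ^ 2 * H.derivative.eval t := (hid t).symm ▸ key
    exact nonneg_of_mul_nonneg_right hmul h2
  -- monotonicity
  have hcont : ContinuousOn (fun t => H.eval t) (Set.Icc x₀ x₁) :=
    (Polynomial.continuous H).continuousOn
  have hdiff : DifferentiableOn ℝ (fun t => H.eval t) (interior (Set.Icc x₀ x₁)) :=
    (Polynomial.differentiable H).differentiableOn
  have hmono : MonotoneOn (fun t => H.eval t) (Set.Icc x₀ x₁) := by
    apply monotoneOn_of_deriv_nonneg (convex_Icc x₀ x₁) hcont hdiff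
    intro t ht
    rw [Polynomial.deriv]
    exact hderiv_nonneg t (interior_subset ht)
  refine ⟨hmono, fun hΔpos => ?_⟩
  -- injectivity on [x₀, x₁]
  have main : ∀ u v : ℝ, u ∈ Set.Icc x₀ x₁ → v ∈ Set.Icc x₀ x₁ →
      H.eval u = H.eval v → u < v → False := by
    intro u v hu hv huv hlt
    -- H is constant on [u, v]
    have hconst : ∀ w ∈ Set.Icc u v, H.eval w = H.eval u := by
      intro w hw
      have hwmem : w ∈ Set.Icc x₀ x₁ :=
        ⟨le_trans hu.1 hw.1, le_trans hw.2 hv.2⟩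
      have h1 : H.eval u ≤ H.eval w := hmono hu hwmem hw.1
      have h2 : H.eval w ≤ H.eval v := hmono hwmem hv hw.2
      have : H.eval v = H.eval u := huv.symm
      linarith
    -- so H - C (H.eval u) has infinitely many roots, hence H is constant
    have hzero : H - Polynomial.C (H.eval u) = 0 := by
      apply Polynomial.eq_zero_of_infinite_isRoot
      apply Set.Infinite.mono (s := Set.Icc u v)
      · intro w hw
        simp [Polynomial.IsRoot, hconst w hw]
      · exact Set.Icc_infinite hlt
    have hHconst : H = Polynomial.C (H.eval u) := by
      have := sub_eq_zero.mp hzero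
      exact this
    have : y₀ = y₁ := by
      rw [← hv₀, ← hv₁, hHconst]; simp
    rw [hΔ, this] at hΔpos
    simp at hΔpos
  have hinj : Set.InjOn (fun t => H.eval t) (Set.Icc x₀ x₁) := by
    intro u hu v hv huv
    rcases lt_trichotomy u v with h | h | h
    · exact absurd (main u v hu hv huv h) (by simp)
    · exact h
    · exact absurd (main v u hv hu huv.symm h) (by simp)
  have hstrict : StrictMonoOn (fun t => H.eval t) (Set.Icc x₀ x₁) := by
    intro u hu v hv hlt
    rcases lt_or_eq_of_le (hmono hu hv hlt.le) with h | h
    · exact h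
    · exact absurd (hinj hu hv h) hlt.ne
  refine ⟨hstrict, ?_, hinj, ?_⟩
  · -- MapsTo
    intro t ht
    constructor
    · rw [← hv₀]; exact hmono (Set.left_mem_Icc.mpr hx.le) ht ht.1
    · rw [← hv₁]; exact hmono ht (Set.right_mem_Icc.mpr hx.le) ht.2
  · -- SurjOn
    have := intermediate_value_Icc hx.le hcont
    rw [hv₀, hv₁] at this
    exact this
end

section
/- Bijectivity of monotone piecewise cubic Hermite transformations: let x₀ < x₁ < … < x_M be real nodes with strictly increasing values y₀ < y₁ < … < y_M and slopes d₀, …, d_M ≥ 0, and set Δ_i = (y_{i+1} − y_i)/(x_{i+1} − x_i). If for every i the Fritsch–Carlson condition d_i ≤ 3Δ_i and d_{i+1} ≤ 3Δ_i holds on [x_i, x_{i+1}], then the piecewise cubic Hermite interpolant H is strictly increasing on [x₀, x_M] and is a bijection from [x₀, x_M] onto [y₀, y_M]. -/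
/-!
On a subinterval `[a, b]` the derivative of a cubic `p` is the quadratic determined by `p'(a)`,
`p'(b)` and `∫ₐᵇ p' = p(b) - p(a)`: with `u = t - a`, `v = b - t`, `A = (b - a) p'(a)`,
`B = (b - a) p'(b)` and `D = p(b) - p(a)`,
`(b - a)³ p'(t) = 6uvD + A v (v - 2u) + B u (u - 2v)`.
The Fritsch–Carlson condition says that `(A, B)` lies in the square `[0, 3D]²`, at whose corners
the right-hand side is `6uvD`, `3Dv²`, `3Du²` and `3D(u - v)²`; being affine in `A` and in `B`, it
is therefore nonnegative, so each piece is monotone, and strictly so because it is not constant.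
Strict monotonicity and continuity glue along the nodes, and a continuous strictly increasing
function maps `[x₀, x_M]` bijectively onto `[H x₀, H x_M] = [y₀, y_M]`.
-/

open Polynomial Set

theorem fritschCarlson_form_nonneg {u v D A B : ℝ} (hu : 0 ≤ u) (hv : 0 ≤ v)
    (hA₀ : 0 ≤ A) (hA : A ≤ 3 * D) (hB₀ : 0 ≤ B) (hB : B ≤ 3 * D) :
    0 ≤ 6 * u * v * D + A * v * (v - 2 * u) + B * u * (u - 2 * v) := by
  have hD : 0 ≤ D := by linarith
  rcases le_total 0 (v - 2 * u) with h₁ | h₁ <;> rcases le_total 0 (u - 2 * v) with h₂ | h₂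
  · linarith [mul_nonneg (mul_nonneg hA₀ hv) h₁, mul_nonneg (mul_nonneg hB₀ hu) h₂,
      mul_nonneg (mul_nonneg hu hv) hD]
  · linarith [mul_nonneg (mul_nonneg hA₀ hv) h₁,
      mul_nonneg (sub_nonneg.2 hB) (mul_nonneg hu (by linarith : 0 ≤ 2 * v - u)),
      mul_nonneg hD (sq_nonneg u)]
  · linarith [mul_nonneg (mul_nonneg hB₀ hu) h₂,
      mul_nonneg (sub_nonneg.2 hA) (mul_nonneg hv (by linarith : 0 ≤ 2 * u - v)),
      mul_nonneg hD (sq_nonneg v)]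
  · linarith [mul_nonneg (sub_nonneg.2 hA) (mul_nonneg hv (by linarith : 0 ≤ 2 * u - v)),
      mul_nonneg (sub_nonneg.2 hB) (mul_nonneg hu (by linarith : 0 ≤ 2 * v - u)),
      mul_nonneg hD (sq_nonneg (u - v))]

namespace Polynomial

section CommRing

variable {R : Type*} [CommRing R] {p : R[X]}

theorem eval_eq_of_natDegree_le_three (hp : p.natDegree ≤ 3) (t : R) :
    p.eval t = p.coeff 0 + p.coeff 1 * t + p.coeff 2 * t ^ 2 + p.coeff 3 * t ^ 3 := by
  rw [eval_eq_sum_range' (Nat.lt_succ_of_le hp)]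
  simp [Finset.sum_range_succ]

theorem derivative_eval_eq_of_natDegree_le_three (hp : p.natDegree ≤ 3) (t : R) :
    p.derivative.eval t = p.coeff 1 + 2 * p.coeff 2 * t + 3 * p.coeff 3 * t ^ 2 := by
  rw [eval_eq_sum_range' ((natDegree_derivative_le p).trans_lt (by omega : p.natDegree - 1 < 3))]
  simp only [coeff_derivative, Finset.sum_range_succ, Finset.range_one, Finset.sum_singleton]
  push_cast
  ring

theorem sub_pow_three_mul_derivative_eval (hp : p.natDegree ≤ 3) (a b t : R) :
    (b - a) ^ 3 * p.derivative.eval t =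
      6 * (t - a) * (b - t) * (p.eval b - p.eval a)
        + (b - a) * p.derivative.eval a * (b - t) * (b - t - 2 * (t - a))
        + (b - a) * p.derivative.eval b * (t - a) * (t - a - 2 * (b - t)) := by
  simp only [eval_eq_of_natDegree_le_three hp, derivative_eval_eq_of_natDegree_le_three hp]
  ring

end CommRing

theorem strictMonoOn_of_monotoneOn {R : Type*} [CommRing R] [IsDomain R] [LinearOrder R]
    [DenselyOrdered R] {p : R[X]} {s : Set R} (hs : s.OrdConnected) (hp : 0 < p.degree)
    (hmono : MonotoneOn (p.eval ·) s) : StrictMonoOn (p.eval ·) s := by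
  intro u hu v hv huv
  refine (hmono hu hv huv.le).lt_of_ne fun heq => ?_
  have hconst : p = C (p.eval u) := by
    refine eq_of_infinite_eval_eq _ _ ((Icc_infinite huv).mono fun r hr => ?_)
    have hr' : r ∈ s := hs.out hu hv hr
    simpa using le_antisymm (heq ▸ hmono hr' hv hr.2) (hmono hu hr' hr.1)
  exact (degree_C_le.trans_lt hp).ne' (congrArg degree hconst)

theorem derivative_eval_nonneg_of_fritschCarlson {p : ℝ[X]} (hp : p.natDegree ≤ 3)
    {a b : ℝ} (hab : a < b) (ha₀ : 0 ≤ p.derivative.eval a) (hb₀ : 0 ≤ p.derivative.eval b)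
    (ha : p.derivative.eval a ≤ 3 * ((p.eval b - p.eval a) / (b - a)))
    (hb : p.derivative.eval b ≤ 3 * ((p.eval b - p.eval a) / (b - a)))
    {t : ℝ} (ht : t ∈ Icc a b) : 0 ≤ p.derivative.eval t := by
  have hba : 0 < b - a := sub_pos.2 hab
  rw [mul_div_assoc', le_div_iff₀ hba] at ha hb
  have key := fritschCarlson_form_nonneg (D := p.eval b - p.eval a) (sub_nonneg.2 ht.1)
    (sub_nonneg.2 ht.2) (mul_nonneg hba.le ha₀) (by linarith) (mul_nonneg hba.le hb₀)
    (by linarith)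
  rw [← sub_pow_three_mul_derivative_eval hp] at key
  exact nonneg_of_mul_nonneg_right key (pow_pos hba 3)

theorem strictMonoOn_Icc_of_fritschCarlson {p : ℝ[X]} (hp : p.degree ≤ 3)
    {a b : ℝ} (hab : a < b) (hlt : p.eval a < p.eval b)
    (ha₀ : 0 ≤ p.derivative.eval a) (hb₀ : 0 ≤ p.derivative.eval b)
    (ha : p.derivative.eval a ≤ 3 * ((p.eval b - p.eval a) / (b - a)))
    (hb : p.derivative.eval b ≤ 3 * ((p.eval b - p.eval a) / (b - a))) :
    StrictMonoOn (p.eval ·) (Icc a b) := by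
  have hpos : 0 < p.degree := by
    by_contra! h
    rw [eq_C_of_degree_le_zero h] at hlt
    simp at hlt
  refine strictMonoOn_of_monotoneOn ordConnected_Icc hpos <|
    monotoneOn_of_deriv_nonneg (convex_Icc a b) p.continuous.continuousOn
      p.differentiable.differentiableOn fun t ht => ?_
  rw [interior_Icc] at ht
  rw [Polynomial.deriv]
  exact derivative_eval_nonneg_of_fritschCarlson (natDegree_le_iff_degree_le.2 hp) hab ha₀ hb₀
    ha hb (Ioo_subset_Icc_self ht)

end Polynomial

theorem Fin.rel_zero_of_rel_castSucc_succ {α : Type*} [Preorder α] {M : ℕ} {x : Fin (M + 1) → α}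
    (hx : Monotone x) (P : α → α → Prop) (hrefl : P (x 0) (x 0))
    (htrans : ∀ a b c, a ≤ b → b ≤ c → P a b → P b c → P a c)
    (hstep : ∀ i : Fin M, P (x i.castSucc) (x i.succ)) (k : Fin (M + 1)) : P (x 0) (x k) := by
  induction k using Fin.induction with
  | zero => exact hrefl
  | succ i ih =>
    exact htrans _ _ _ (hx (Fin.zero_le _)) (hx Fin.castSucc_lt_succ.le) ih (hstep i)

section Gluing

variable {α β : Type*} [LinearOrder α] {M : ℕ} {x : Fin (M + 1) → α} {f : α → β}

theorem strictMonoOn_Icc_of_forall_castSucc_succ [Preorder β] (hx : Monotone x)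
    (hf : ∀ i : Fin M, StrictMonoOn f (Icc (x i.castSucc) (x i.succ))) (k : Fin (M + 1)) :
    StrictMonoOn f (Icc (x 0) (x k)) := by
  refine Fin.rel_zero_of_rel_castSucc_succ hx (fun a b => StrictMonoOn f (Icc a b))
    (by simp) (fun a b c hab hbc h₁ h₂ => ?_) hf k
  rw [← Icc_union_Icc_eq_Icc hab hbc]
  exact h₁.union h₂ (isGreatest_Icc hab) (isLeast_Icc hbc)

theorem continuousOn_Icc_of_forall_castSucc_succ [TopologicalSpace α] [OrderClosedTopology α]
    [TopologicalSpace β] (hx : Monotone x)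
    (hf : ∀ i : Fin M, ContinuousOn f (Icc (x i.castSucc) (x i.succ))) (k : Fin (M + 1)) :
    ContinuousOn f (Icc (x 0) (x k)) := by
  refine Fin.rel_zero_of_rel_castSucc_succ hx (fun a b => ContinuousOn f (Icc a b))
    (by simp [continuousOn_singleton]) (fun a b c hab hbc h₁ h₂ => ?_) hf k
  rw [← Icc_union_Icc_eq_Icc hab hbc]
  exact h₁.union_of_isClosed h₂ isClosed_Icc isClosed_Icc

end Gluing

/-- Bijectivity of monotone piecewise cubic Hermite transformations: with strictly
increasing nodes `x` and values `y`, nonnegative slopes `d` satisfying the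
Fritsch–Carlson condition `d i ≤ 3 Δ i` and `d (i+1) ≤ 3 Δ i` on every subinterval,
the piecewise cubic Hermite interpolant `H` is strictly increasing on `[x 0, x M]`
and a bijection from `[x 0, x M]` onto `[y 0, y M]`. -/
theorem pchip_bijOn (M : ℕ) (hM : 0 < M) (x y d : Fin (M + 1) → ℝ)
    (hx : StrictMono x) (hy : StrictMono y) (hd : ∀ i, 0 ≤ d i)
    (Hs : Fin M → Polynomial ℝ)
    (hdeg : ∀ i, (Hs i).degree ≤ 3)
    (hv₀ : ∀ i : Fin M, (Hs i).eval (x i.castSucc) = y i.castSucc)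
    (hv₁ : ∀ i : Fin M, (Hs i).eval (x i.succ) = y i.succ)
    (hd₀ : ∀ i : Fin M, (Hs i).derivative.eval (x i.castSucc) = d i.castSucc)
    (hd₁ : ∀ i : Fin M, (Hs i).derivative.eval (x i.succ) = d i.succ)
    (hFC : ∀ i : Fin M,
      d i.castSucc ≤ 3 * ((y i.succ - y i.castSucc) / (x i.succ - x i.castSucc)) ∧
      d i.succ ≤ 3 * ((y i.succ - y i.castSucc) / (x i.succ - x i.castSucc)))
    (H : ℝ → ℝ)
    (hH : ∀ i : Fin M, ∀ t ∈ Set.Icc (x i.castSucc) (x i.succ), H t = (Hs i).eval t) :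
    StrictMonoOn H (Set.Icc (x 0) (x (Fin.last M))) ∧
      Set.BijOn H (Set.Icc (x 0) (x (Fin.last M)))
        (Set.Icc (y 0) (y (Fin.last M))) := by
  obtain ⟨n, rfl⟩ := Nat.exists_eq_add_one_of_ne_zero hM.ne'
  have hxi (i : Fin (n + 1)) : x i.castSucc < x i.succ := hx Fin.castSucc_lt_succ
  have hpiece (i : Fin (n + 1)) : StrictMonoOn H (Icc (x i.castSucc) (x i.succ)) := by
    refine (strictMonoOn_Icc_of_fritschCarlson (hdeg i) (hxi i) ?_ ?_ ?_ ?_ ?_).congr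
      fun t ht => (hH i t ht).symm <;> simp only [hv₀, hv₁, hd₀, hd₁]
    exacts [hy Fin.castSucc_lt_succ, hd _, hd _, (hFC i).1, (hFC i).2]
  have hcont (i : Fin (n + 1)) : ContinuousOn H (Icc (x i.castSucc) (x i.succ)) :=
    (Hs i).continuous.continuousOn.congr (hH i)
  have hmono := strictMonoOn_Icc_of_forall_castSucc_succ hx.monotone hpiece (Fin.last _)
  have himage := (continuousOn_Icc_of_forall_castSucc_succ hx.monotone hcont
    (Fin.last _)).image_Icc_of_monotoneOn (hx.monotone (Fin.zero_le _)) hmono.monotoneOn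
  have hfirst : H (x 0) = y 0 := by
    simpa using (hH 0 _ (left_mem_Icc.2 (hxi 0).le)).trans (hv₀ 0)
  have hlast : H (x (Fin.last _)) = y (Fin.last _) := by
    simpa using (hH (Fin.last n) _ (right_mem_Icc.2 (hxi _).le)).trans (hv₁ _)
  rw [← hfirst, ← hlast, ← himage]
  exact ⟨hmono, hmono.injOn.bijOn_image⟩
end

section
/- Eckart–Young theorem in the Frobenius norm: let A be a real m × n matrix with singular values σ₁ ≥ σ₂ ≥ … ≥ σ_{min(m,n)} ≥ 0 and let N < min(m,n). Then for every real m × n matrix B of rank at most N one has ‖A − B‖_F² ≥ Σ_{k=N+1}^{min(m,n)} σ_k², and this lower bound is attained by the rank-N truncated singular value decomposition of A; in particular the minimal squared Frobenius error over rank-≤N matrices equals the sum of the squares of the discarded singular values. -/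
/-!
If `rank B ≤ N`, the kernel of `B` contains `n - N` orthonormal vectors; let them be the columns
of `P`. Right multiplication by `P` does not increase the Frobenius norm, so
`‖A - B‖² ≥ ‖(A - B) P‖² = ‖A P‖²`. After the orthogonal change of variables `A ↦ Uᵀ A V` the
matrix `A` is the rectangular diagonal matrix of the `σ k`, and `‖A P‖² = ∑ₖ σₖ² cₖ`, where the
squared row norms `cₖ` of `P` lie in `[0, 1]` and add up to `n - N`. Such a weighted sum of the
decreasing `σₖ²` is at least the sum of the `n - N` smallest ones. The truncated singular value
decomposition attains the bound because the difference is `U diag(0, …, 0, σ_N, σ_{N+1}, …) Vᵀ`.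
-/

open Matrix Finset

lemma Fin.card_filter_le_val (n N : ℕ) : #{i : Fin n | N ≤ (i : ℕ)} = n - N := by
  have := card_filter_add_card_filter_not (s := (univ : Finset (Fin n)))
    (fun i : Fin n => (i : ℕ) < N)
  simp only [not_lt, Fin.card_filter_val_lt, card_univ, Fintype.card_fin] at this
  omega

lemma Fin.sum_dite_val_lt {M : Type*} [AddCommMonoid M] {a b : ℕ} (hba : b ≤ a)
    (f : Fin b → M) : ∑ i : Fin a, (if h : (i : ℕ) < b then f ⟨i, h⟩ else 0) = ∑ k, f k :=
  (Fintype.sum_of_injective (Fin.castLE hba) (Fin.castLE_injective hba) _ _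
    (fun i hi => dif_neg fun h => hi ⟨⟨i, h⟩, rfl⟩) (fun k => by simp)).symm

lemma Finset.sum_le_sum_mul_of_mem_le_notMem {ι : Type*} [Fintype ι] (s : Finset ι)
    {lam c : ι → ℝ} (hlam : ∀ k ∈ s, ∀ l ∉ s, lam k ≤ lam l) (hc0 : ∀ k, 0 ≤ c k)
    (hc1 : ∀ k, c k ≤ 1) (hc : ∑ k, c k = #s) : ∑ k ∈ s, lam k ≤ ∑ k, lam k * c k := by
  classical
  rcases s.eq_empty_or_nonempty with rfl | hs
  · simp_all [Finset.sum_eq_zero_iff_of_nonneg]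
  -- `t` separates the values of `lam` on `s` from those off `s`.
  set t := s.sup' hs lam
  have key : ∑ k, lam k * c k - ∑ k ∈ s, lam k
      = ∑ k, (lam k - t) * (c k - if k ∈ s then 1 else 0) := by
    simp only [sub_mul, mul_sub, Finset.sum_sub_distrib, mul_ite, mul_one, mul_zero,
      Finset.sum_ite_mem, Finset.univ_inter, ← Finset.mul_sum, hc, Finset.sum_const, nsmul_eq_mul]
    ring
  have hterm : ∀ k, 0 ≤ (lam k - t) * (c k - if k ∈ s then 1 else 0) := by
    intro k
    by_cases hk : k ∈ s
    · have : lam k ≤ t := Finset.le_sup' lam hk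
      simp only [hk, if_true]
      nlinarith [hc1 k]
    · have : t ≤ lam k := Finset.sup'_le hs lam fun l hl => hlam l hl k hk
      simp only [hk, if_false]
      nlinarith [hc0 k]
  linarith [Finset.sum_nonneg fun k (_ : k ∈ Finset.univ) => hterm k]

namespace Matrix

lemma rank_mul_mul_le {ι κ μ ν R : Type*} [Fintype κ] [Fintype μ] [Fintype ν] [CommSemiring R]
    [StrongRankCondition R] (A : Matrix ι κ R) (B : Matrix κ μ R) (C : Matrix μ ν R) :
    (A * B * C).rank ≤ B.rank :=
  (rank_mul_le_left _ _).trans (rank_mul_le_right _ _)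

section Frobenius

variable {ι κ μ : Type*} [Fintype ι] [Fintype κ] [Fintype μ]

def frobSq (M : Matrix ι κ ℝ) : ℝ := ∑ i, ∑ j, M i j ^ 2

lemma frobSq_eq_trace (M : Matrix ι κ ℝ) : frobSq M = trace (M * Mᵀ) := by
  simp [frobSq, trace, mul_apply, sq]

lemma frobSq_nonneg (M : Matrix ι κ ℝ) : 0 ≤ frobSq M := by
  unfold frobSq; positivity

lemma frobSq_orthogonal_mul [DecidableEq ι] {W : Matrix ι ι ℝ} (hW : Wᵀ * W = 1)
    (M : Matrix ι κ ℝ) : frobSq (W * M) = frobSq M := by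
  rw [frobSq_eq_trace, frobSq_eq_trace, transpose_mul, ← Matrix.mul_assoc, trace_mul_comm,
    ← Matrix.mul_assoc, ← Matrix.mul_assoc, hW, Matrix.one_mul]

lemma frobSq_mul_orthogonal [DecidableEq κ] (M : Matrix ι κ ℝ) {W : Matrix κ κ ℝ}
    (hW : W * Wᵀ = 1) : frobSq (M * W) = frobSq M := by
  rw [frobSq_eq_trace, frobSq_eq_trace, transpose_mul, Matrix.mul_assoc,
    ← Matrix.mul_assoc W, hW, Matrix.one_mul]

lemma frobSq_orthogonal_mul_mul_transpose [DecidableEq ι] [DecidableEq κ] {U : Matrix ι ι ℝ}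
    {V : Matrix κ κ ℝ} (hU : Uᵀ * U = 1) (hV : Vᵀ * V = 1) (M : Matrix ι κ ℝ) :
    frobSq (U * M * Vᵀ) = frobSq M := by
  rw [frobSq_mul_orthogonal _ (by rwa [transpose_transpose]), frobSq_orthogonal_mul hU]

lemma frobSq_orthogonal_mul_mul_transpose_sub [DecidableEq ι] [DecidableEq κ]
    {U : Matrix ι ι ℝ} {V : Matrix κ κ ℝ} (hU : Uᵀ * U = 1) (hV : Vᵀ * V = 1)
    (D M : Matrix ι κ ℝ) : frobSq (U * D * Vᵀ - M) = frobSq (D - Uᵀ * M * V) := by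
  rw [← frobSq_orthogonal_mul_mul_transpose hU hV (D - Uᵀ * M * V), Matrix.mul_sub,
    Matrix.sub_mul, ← Matrix.mul_assoc U, ← Matrix.mul_assoc U, mul_eq_one_comm.mp hU,
    Matrix.one_mul, Matrix.mul_assoc M, mul_eq_one_comm.mp hV, Matrix.mul_one]

/-- `‖M‖² = ‖M P‖² + ‖M (1 - P Pᵀ)‖²`, as `1 - P Pᵀ` is an orthogonal projection. -/
lemma frobSq_mul_le [DecidableEq μ] (M : Matrix ι κ ℝ) {P : Matrix κ μ ℝ}
    (hP : Pᵀ * P = 1) : frobSq (M * P) ≤ frobSq M := by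
  classical
  set R : Matrix κ κ ℝ := 1 - P * Pᵀ
  have hRR : R * Rᵀ = R := by
    simp only [R, transpose_sub, transpose_one, transpose_mul, transpose_transpose,
      Matrix.sub_mul, Matrix.mul_sub, Matrix.one_mul, Matrix.mul_one, Matrix.mul_assoc,
      ← Matrix.mul_assoc Pᵀ P, hP]
    abel
  have hsplit : M * Mᵀ = M * P * (M * P)ᵀ + M * R * (M * R)ᵀ :=
    calc M * Mᵀ = M * (P * Pᵀ + R * Rᵀ) * Mᵀ := by rw [hRR]; simp [R]
      _ = M * P * (M * P)ᵀ + M * R * (M * R)ᵀ := by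
        simp only [transpose_mul, Matrix.mul_add, Matrix.add_mul, Matrix.mul_assoc]
  have := congrArg trace hsplit
  rw [trace_add, ← frobSq_eq_trace, ← frobSq_eq_trace, ← frobSq_eq_trace] at this
  linarith [frobSq_nonneg (M * R)]

lemma frobSq_mul_eq_sum_of_transpose_mul_self_eq_diagonal [DecidableEq κ] {M : Matrix ι κ ℝ}
    {lam : κ → ℝ} (hM : Mᵀ * M = diagonal lam) (P : Matrix κ μ ℝ) :
    frobSq (M * P) = ∑ k, lam k * ∑ j, P k j ^ 2 := by
  rw [frobSq_eq_trace, transpose_mul, trace_mul_comm, Matrix.mul_assoc, ← Matrix.mul_assoc Mᵀ,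
    ← Matrix.mul_assoc, hM]
  simp [trace, mul_apply, diagonal_apply, Finset.mul_sum, sq]
  rw [Finset.sum_comm]
  exact Finset.sum_congr rfl fun _ _ => Finset.sum_congr rfl fun _ _ => by ring

lemma sum_sq_row_le_one [DecidableEq μ] {Q : Matrix κ μ ℝ} (hQ : Qᵀ * Q = 1) (k : κ) :
    ∑ j, Q k j ^ 2 ≤ 1 := by
  classical
  simpa [frobSq, mul_apply] using
    frobSq_mul_le (of fun (_ : Unit) l => if l = k then (1 : ℝ) else 0) hQ

lemma sum_sum_sq_eq_card [DecidableEq μ] {Q : Matrix κ μ ℝ} (hQ : Qᵀ * Q = 1) :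
    ∑ k, ∑ j, Q k j ^ 2 = Fintype.card μ := by
  rw [← frobSq, frobSq_eq_trace, trace_mul_comm, hQ, trace_one]

lemma exists_transpose_mul_self_eq_one_and_mul_eq_zero [DecidableEq κ]
    (B : Matrix ι κ ℝ) {r : ℕ} (hr : r + B.rank ≤ Fintype.card κ) :
    ∃ P : Matrix κ (Fin r) ℝ, Pᵀ * P = 1 ∧ B * P = 0 := by
  have hK : r ≤ Module.finrank ℝ (LinearMap.ker (toEuclideanLin B)) := by
    have hB : B.rank = Module.finrank ℝ (LinearMap.range (toEuclideanLin B)) := by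
      rw [toEuclideanLin_eq_toLin_orthonormal]
      exact rank_eq_finrank_range_toLin _ _ _
    have := LinearMap.finrank_range_add_finrank_ker (toEuclideanLin B)
    rw [finrank_euclideanSpace] at this
    omega
  set b := stdOrthonormalBasis ℝ (LinearMap.ker (toEuclideanLin B))
  set v : Fin r → EuclideanSpace ℝ κ := fun j => b (Fin.castLE hK j)
  have hv : Orthonormal ℝ v :=
    (b.orthonormal.comp_linearIsometry (Submodule.subtypeₗᵢ _)).comp _ (Fin.castLE_injective hK)
  refine ⟨of fun i j => v j i, ?_, ?_⟩
  · have := gram_eq_conjTranspose_mul (EuclideanSpace.basisFun κ ℝ) v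
    rw [gram_eq_one_iff_orthonormal.mpr hv] at this
    simpa [conjTranspose_eq_transpose_of_trivial] using this.symm
  · ext i j
    have hj : toEuclideanLin B (v j) = 0 := (b (Fin.castLE hK j)).2
    simpa [mul_apply, toLpLin_apply, mulVec, dotProduct] using congrArg (· i) hj

end Frobenius

section RectDiagonal

variable {R : Type*} {m n : ℕ}

def rectDiagonal [Zero R] (d : Fin (min m n) → R) : Matrix (Fin m) (Fin n) R :=
  of fun i j => if h : (i : ℕ) = j ∧ (i : ℕ) < min m n then d ⟨i, h.2⟩ else 0

lemma rectDiagonal_sub [AddGroup R] (d e : Fin (min m n) → R) :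
    rectDiagonal d - rectDiagonal e = rectDiagonal (d - e) := by
  ext i j
  simp only [rectDiagonal, sub_apply, of_apply, Pi.sub_apply]
  split_ifs <;> simp

lemma transpose_mul_rectDiagonal_self [CommRing R] (d : Fin (min m n) → R) :
    (rectDiagonal d)ᵀ * rectDiagonal d =
      diagonal fun j : Fin n => if h : (j : ℕ) < min m n then d ⟨j, h⟩ ^ 2 else 0 := by
  ext j l
  simp only [mul_apply, transpose_apply, rectDiagonal, of_apply, diagonal_apply]
  by_cases hj : (j : ℕ) < min m n
  · rw [Finset.sum_eq_single ⟨j, hj.trans_le (min_le_left m n)⟩]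
    · by_cases hjl : j = l
      · subst hjl; simp [hj, sq]
      · simp [hjl, Fin.val_ne_of_ne hjl]
    · intro i _ hi
      rw [dif_neg fun h => hi (Fin.ext h.1), zero_mul]
    · simp
  · rw [Finset.sum_eq_zero fun i _ => by
      rw [dif_neg fun (h : (i : ℕ) = j ∧ (i : ℕ) < min m n) => hj (h.1 ▸ h.2), zero_mul]]
    simp [hj]

lemma rank_rectDiagonal_le [Field R] {N : ℕ} {d : Fin (min m n) → R}
    (hd : ∀ k : Fin (min m n), N ≤ (k : ℕ) → d k = 0) : (rectDiagonal d).rank ≤ N := by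
  classical
  have hproj : rectDiagonal d =
      rectDiagonal d * diagonal fun j : Fin n => if (j : ℕ) < N then (1 : R) else 0 := by
    ext i j
    simp only [rectDiagonal, mul_diagonal, of_apply]
    split_ifs <;> simp_all
  rw [hproj]
  refine (rank_mul_le_right _ _).trans ?_
  rw [rank_diagonal]
  simp [Fintype.card_subtype, Fin.card_filter_val_lt]

lemma frobSq_rectDiagonal (d : Fin (min m n) → ℝ) : frobSq (rectDiagonal d) = ∑ k, d k ^ 2 := by
  rw [← Matrix.mul_one (rectDiagonal d),
    frobSq_mul_eq_sum_of_transpose_mul_self_eq_diagonal (transpose_mul_rectDiagonal_self d)]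
  simpa [one_apply] using Fin.sum_dite_val_lt (min_le_right m n) fun k => d k ^ 2

lemma sum_tail_sq_le_frobSq_rectDiagonal_sub {σ : Fin (min m n) → ℝ} (hσ0 : ∀ k, 0 ≤ σ k)
    (hσ : Antitone σ) {N : ℕ} {B : Matrix (Fin m) (Fin n) ℝ} (hB : B.rank ≤ N) :
    ∑ k ∈ univ.filter (fun k : Fin (min m n) => N ≤ (k : ℕ)), σ k ^ 2 ≤
      frobSq (rectDiagonal σ - B) := by
  obtain ⟨P, hP, hBP⟩ := B.exists_transpose_mul_self_eq_one_and_mul_eq_zero (r := n - N)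
    (by have := B.rank_le_width; simp only [Fintype.card_fin] at this ⊢; omega)
  set lam : Fin n → ℝ := fun j => if h : (j : ℕ) < min m n then σ ⟨j, h⟩ ^ 2 else 0
  have hlam : ∀ k ∈ univ.filter (fun k : Fin n => N ≤ (k : ℕ)),
      ∀ l ∉ univ.filter (fun k : Fin n => N ≤ (k : ℕ)), lam k ≤ lam l := by
    intro k hk l hl
    simp only [mem_filter, mem_univ, true_and, not_le] at hk hl
    by_cases hkm : (k : ℕ) < min m n
    · have hlm : (l : ℕ) < min m n := by omega
      simp only [lam, dif_pos hkm, dif_pos hlm]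
      exact pow_le_pow_left₀ (hσ0 _) (hσ (Fin.mk_le_mk.mpr (by omega))) 2
    · simp only [lam, dif_neg hkm]
      split_ifs <;> positivity
  have htail : ∑ k ∈ univ.filter (fun k : Fin (min m n) => N ≤ (k : ℕ)), σ k ^ 2 =
      ∑ k ∈ univ.filter (fun k : Fin n => N ≤ (k : ℕ)), lam k := by
    rw [sum_filter, sum_filter, ← Fin.sum_dite_val_lt (min_le_right m n)]
    refine sum_congr rfl fun j _ => ?_
    simp only [lam]
    split_ifs <;> rfl
  calc ∑ k ∈ univ.filter (fun k : Fin (min m n) => N ≤ (k : ℕ)), σ k ^ 2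
      = ∑ k ∈ univ.filter (fun k : Fin n => N ≤ (k : ℕ)), lam k := htail
    _ ≤ ∑ k, lam k * ∑ j, P k j ^ 2 :=
      sum_le_sum_mul_of_mem_le_notMem _ hlam (fun k => by positivity) (sum_sq_row_le_one hP)
        (by rw [sum_sum_sq_eq_card hP, Fintype.card_fin, Fin.card_filter_le_val])
    _ = frobSq ((rectDiagonal σ - B) * P) := by
      rw [Matrix.sub_mul, hBP, sub_zero,
        frobSq_mul_eq_sum_of_transpose_mul_self_eq_diagonal (transpose_mul_rectDiagonal_self σ)]
    _ ≤ frobSq (rectDiagonal σ - B) := frobSq_mul_le _ hP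

end RectDiagonal

end Matrix

theorem eckartYoung_frobenius_general (m n N : ℕ) (A : Matrix (Fin m) (Fin n) ℝ)
    (U : Matrix (Fin m) (Fin m) ℝ) (V : Matrix (Fin n) (Fin n) ℝ)
    (σ : Fin (min m n) → ℝ)
    (hU : U.transpose * U = 1) (hV : V.transpose * V = 1)
    (hσ0 : ∀ k, 0 ≤ σ k) (hσdec : Antitone σ)
    (hA : A = U * (Matrix.of fun (i : Fin m) (j : Fin n) =>
      if h : (i : ℕ) = (j : ℕ) ∧ (i : ℕ) < min m n then σ ⟨(i : ℕ), h.2⟩ else 0) *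
      V.transpose) :
    (∀ B : Matrix (Fin m) (Fin n) ℝ, B.rank ≤ N →
      ∑ k ∈ Finset.univ.filter (fun k : Fin (min m n) => N ≤ (k : ℕ)), σ k ^ 2 ≤
        ∑ i, ∑ j, (A i j - B i j) ^ 2) ∧
    (Matrix.rank (U * (Matrix.of fun (i : Fin m) (j : Fin n) =>
        if h : (i : ℕ) = (j : ℕ) ∧ (i : ℕ) < min m n ∧ (i : ℕ) < N then
          σ ⟨(i : ℕ), h.2.1⟩ else 0) * V.transpose) ≤ N ∧
      ∑ i, ∑ j, (A i j - (U * (Matrix.of fun (i : Fin m) (j : Fin n) =>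
        if h : (i : ℕ) = (j : ℕ) ∧ (i : ℕ) < min m n ∧ (i : ℕ) < N then
          σ ⟨(i : ℕ), h.2.1⟩ else 0) * V.transpose) i j) ^ 2 =
        ∑ k ∈ Finset.univ.filter (fun k : Fin (min m n) => N ≤ (k : ℕ)), σ k ^ 2) := by
  replace hA : A = U * rectDiagonal σ * Vᵀ := hA
  set σN : Fin (min m n) → ℝ := fun k => if (k : ℕ) < N then σ k else 0
  have htrunc : (Matrix.of fun (i : Fin m) (j : Fin n) =>
      if h : (i : ℕ) = (j : ℕ) ∧ (i : ℕ) < min m n ∧ (i : ℕ) < N then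
        σ ⟨(i : ℕ), h.2.1⟩ else 0) = rectDiagonal σN := by
    ext i j
    simp only [rectDiagonal, of_apply, σN]
    split_ifs <;> first | rfl | omega
  have hfrob (M : Matrix (Fin m) (Fin n) ℝ) : ∑ i, ∑ j, (A i j - M i j) ^ 2 = frobSq (A - M) :=
    rfl
  refine ⟨fun B hB => ?_, ?_, ?_⟩
  · rw [hfrob, hA, frobSq_orthogonal_mul_mul_transpose_sub hU hV]
    exact sum_tail_sq_le_frobSq_rectDiagonal_sub hσ0 hσdec ((rank_mul_mul_le _ _ _).trans hB)
  · rw [htrunc]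
    exact (rank_mul_mul_le _ _ _).trans (rank_rectDiagonal_le fun k hk => if_neg (not_lt.mpr hk))
  · rw [htrunc, hfrob, hA, ← Matrix.sub_mul, ← Matrix.mul_sub,
      frobSq_orthogonal_mul_mul_transpose hU hV, rectDiagonal_sub, frobSq_rectDiagonal, sum_filter]
    refine sum_congr rfl fun k _ => ?_
    simp only [Pi.sub_apply, σN]
    split_ifs <;> first | omega | ring

/-- Eckart–Young theorem in the Frobenius norm: if `A = U D Vᵀ` is a singular value
decomposition of the real `m × n` matrix `A`, with orthogonal `U`, `V` and decreasing
nonnegative singular values `σ`, and `N < min m n`, then every matrix `B` of rank at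
most `N` satisfies `‖A − B‖_F² ≥ ∑_{k ≥ N} σ k ²` (0-indexed tail), and the bound is
attained by the rank-`N` truncated singular value decomposition of `A`. -/
theorem eckartYoung_frobenius (m n N : ℕ) (A : Matrix (Fin m) (Fin n) ℝ)
    (U : Matrix (Fin m) (Fin m) ℝ) (V : Matrix (Fin n) (Fin n) ℝ)
    (σ : Fin (min m n) → ℝ)
    (hU : U.transpose * U = 1) (hV : V.transpose * V = 1)
    (hσ0 : ∀ k, 0 ≤ σ k) (hσdec : Antitone σ)
    (hA : A = U * (Matrix.of fun (i : Fin m) (j : Fin n) =>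
      if h : (i : ℕ) = (j : ℕ) ∧ (i : ℕ) < min m n then σ ⟨(i : ℕ), h.2⟩ else 0) *
      V.transpose)
    (hN : N < min m n) :
    (∀ B : Matrix (Fin m) (Fin n) ℝ, B.rank ≤ N →
      ∑ k ∈ Finset.univ.filter (fun k : Fin (min m n) => N ≤ (k : ℕ)), σ k ^ 2 ≤
        ∑ i, ∑ j, (A i j - B i j) ^ 2) ∧
    (Matrix.rank (U * (Matrix.of fun (i : Fin m) (j : Fin n) =>
        if h : (i : ℕ) = (j : ℕ) ∧ (i : ℕ) < min m n ∧ (i : ℕ) < N then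
          σ ⟨(i : ℕ), h.2.1⟩ else 0) * V.transpose) ≤ N ∧
      ∑ i, ∑ j, (A i j - (U * (Matrix.of fun (i : Fin m) (j : Fin n) =>
        if h : (i : ℕ) = (j : ℕ) ∧ (i : ℕ) < min m n ∧ (i : ℕ) < N then
          σ ⟨(i : ℕ), h.2.1⟩ else 0) * V.transpose) i j) ^ 2 =
        ∑ k ∈ Finset.univ.filter (fun k : Fin (min m n) => N ≤ (k : ℕ)), σ k ^ 2) :=
  eckartYoung_frobenius_general m n N A U V σ hU hV hσ0 hσdec hA
end

section
/- Kolmogorov width bound by the POD eigenvalue tail: let u₁, …, u_m be vectors in a finite-dimensional real inner product space H of dimension n, let λ₁ ≥ λ₂ ≥ … ≥ λ_n ≥ 0 be the eigenvalues of the correlation operator C = Σ_{i=1}^m u_i ⊗ u_i, and let N ≤ n. Then the Kolmogorov N-width of the finite set M = {u₁, …, u_m} satisfies d_N(M)² ≤ Σ_{k=N+1}^n λ_k. -/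
/-- The Kolmogorov `N`-width of a subset `M` of a real normed vector space `V`:
the infimum, over all linear subspaces `W ⊆ V` of finite dimension at most `N`,
of `sup_{f ∈ M} inf_{g ∈ W} ‖f − g‖`. -/
noncomputable def kolWidth {V : Type*} [NormedAddCommGroup V] [NormedSpace ℝ V]
    (M : Set V) (N : ℕ) : ℝ :=
  sInf { r : ℝ | ∃ W : Submodule ℝ V, FiniteDimensional ℝ W ∧ Module.finrank ℝ W ≤ N ∧
    r = sSup ((fun f => sInf ((fun g => ‖f - g‖) '' (W : Set V))) '' M) }

/-- Kolmogorov width bound by the POD eigenvalue tail: if `lam` are the decreasing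
nonnegative eigenvalues of the correlation operator `C = ∑ i, u i ⊗ u i`, with
orthonormal eigenbasis `φ`, then the Kolmogorov `N`-width of the set of snapshots
satisfies `d_N(M)² ≤ ∑ k ≥ N, lam k` (0-indexed tail). -/
theorem kolWidth_sq_le_pod_tail {H : Type*} [NormedAddCommGroup H]
    [InnerProductSpace ℝ H] [FiniteDimensional ℝ H]
    (n : ℕ) (hn : Module.finrank ℝ H = n) (m : ℕ) (u : Fin m → H)
    (φ : Fin n → H) (lam : Fin n → ℝ)
    (hφ : Orthonormal ℝ φ) (hdec : Antitone lam) (hpos : ∀ k, 0 ≤ lam k)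
    (heig : ∀ k, ∑ i, (inner ℝ (u i) (φ k) : ℝ) • u i = lam k • φ k)
    (N : ℕ) (hN : N ≤ n) :
    kolWidth (Set.range u) N ^ 2 ≤
      ∑ k ∈ Finset.univ.filter (fun k : Fin n => N ≤ (k : ℕ)), lam k := by

  classical
  -- orthonormal basis
  have hcard : Fintype.card (Fin n) = Module.finrank ℝ H := by simp [hn]
  have hspan : Submodule.span ℝ (Set.range φ) = ⊤ :=
    hφ.linearIndependent.span_eq_top_of_card_eq_finrank' hcard
  let b : Module.Basis (Fin n) ℝ H := Module.Basis.mk hφ.linearIndependent hspan.ge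
  have hb : ⇑b = φ := Module.Basis.coe_mk _ _
  have hφb : Orthonormal ℝ ⇑b := by rwa [hb]
  let ob : OrthonormalBasis (Fin n) ℝ H := b.toOrthonormalBasis hφb
  have hob : ⇑ob = φ := by rw [Module.Basis.coe_toOrthonormalBasis, hb]
  -- eigenvalue = sum of squared coefficients
  have hlam : ∀ k, lam k = ∑ i, (inner ℝ (u i) (φ k) : ℝ) ^ 2 := by
    intro k
    have h := congrArg (fun x => (inner ℝ x (φ k) : ℝ)) (heig k)
    simp only [sum_inner, real_inner_smul_left] at h
    rw [real_inner_self_eq_norm_sq, hφ.1 k] at h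
    simp only [one_pow, mul_one] at h
    rw [← h]
    exact Finset.sum_congr rfl fun i _ => (sq _).symm
  have hcoef_le : ∀ i k, (inner ℝ (u i) (φ k) : ℝ) ^ 2 ≤ lam k := by
    intro i k
    rw [hlam k]
    exact Finset.single_le_sum (f := fun j => (inner ℝ (u j) (φ k) : ℝ) ^ 2)
      (fun j _ => sq_nonneg _) (Finset.mem_univ i)
  set T : ℝ := ∑ k ∈ Finset.univ.filter (fun k : Fin n => N ≤ (k : ℕ)), lam k with hT
  have hT0 : 0 ≤ T := Finset.sum_nonneg fun k _ => hpos k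
  -- the subspace
  set s : Finset (Fin n) := Finset.univ.filter (fun k : Fin n => (k : ℕ) < N) with hs
  set W : Submodule ℝ H := Submodule.span ℝ ((s.image φ : Finset H) : Set H) with hW
  have hWfin : FiniteDimensional ℝ W := inferInstance
  have hWrank : Module.finrank ℝ W ≤ N := by
    refine le_trans (finrank_span_finset_le_card (s.image φ)) ?_
    refine le_trans (Finset.card_image_le) ?_
    have : s.card ≤ (Finset.range N).card := by
      refine Finset.card_le_card_of_injOn (fun k => (k : ℕ))
        (fun k hk => Finset.mem_range.mpr ((Finset.mem_filter.mp hk).2)) ?_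
      intro a _ c _ h
      exact Fin.ext h
    simpa using this
  have hS0 : ∀ r ∈ { r : ℝ | ∃ W' : Submodule ℝ H, FiniteDimensional ℝ W' ∧
      Module.finrank ℝ W' ≤ N ∧
      r = sSup ((fun f => sInf ((fun g => ‖f - g‖) '' (W' : Set H))) '' Set.range u) }, 0 ≤ r := by
    rintro r ⟨W', _, _, rfl⟩
    refine Real.sSup_nonneg ?_
    rintro _ ⟨f, _, rfl⟩
    refine Real.sInf_nonneg ?_
    rintro _ ⟨g, _, rfl⟩
    exact norm_nonneg _
  have hkol0 : 0 ≤ kolWidth (Set.range u) N := Real.sInf_nonneg hS0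
  -- kolWidth ≤ the value achieved by W
  have hkolW : kolWidth (Set.range u) N ≤
      sSup ((fun f => sInf ((fun g => ‖f - g‖) '' (W : Set H))) '' Set.range u) := by
    refine csInf_le ⟨0, fun r hr => hS0 r hr⟩ ?_
    exact ⟨W, hWfin, hWrank, rfl⟩
  -- per-snapshot bound
  have hper : ∀ i : Fin m, sInf ((fun g => ‖u i - g‖) '' (W : Set H)) ≤ Real.sqrt T := by
    intro i
    set c : Fin n → ℝ := fun k => (inner ℝ (u i) (φ k) : ℝ) with hc
    set g₀ : H := ∑ k ∈ s, c k • φ k with hg₀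
    have hg₀mem : g₀ ∈ (W : Set H) := by
      refine Submodule.sum_mem W fun k hk => Submodule.smul_mem W _ ?_
      exact Submodule.subset_span (by
        simp only [Finset.coe_image, Set.mem_image, Finset.mem_coe]
        exact ⟨k, hk, rfl⟩)
    have hrepr : u i = ∑ k, c k • φ k := by
      have := ob.sum_repr' (u i)
      rw [hob] at this
      rw [← this]
      exact Finset.sum_congr rfl fun k _ => by rw [real_inner_comm]
    have hdiff : u i - g₀ =
        ∑ k ∈ Finset.univ.filter (fun k : Fin n => N ≤ (k : ℕ)), c k • φ k := by
      have hnot : Finset.univ.filter (fun k : Fin n => N ≤ (k : ℕ)) =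
          Finset.univ.filter (fun k : Fin n => ¬ ((k : ℕ) < N)) := by
        simp [not_lt]
      rw [hrepr, hg₀, hs, hnot, sub_eq_iff_eq_add, add_comm]
      exact (Finset.sum_filter_add_sum_filter_not Finset.univ
        (fun k : Fin n => (k : ℕ) < N) (fun k => c k • φ k)).symm
    have hnormsq : ‖u i - g₀‖ ^ 2 ≤ T := by
      have h1 : ‖u i - g₀‖ ^ 2 = (inner ℝ (u i - g₀) (u i - g₀) : ℝ) :=
        (real_inner_self_eq_norm_sq _).symm
      rw [h1, hdiff, hφ.inner_sum c c]
      rw [hT]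
      refine Finset.sum_le_sum fun k _ => ?_
      simpa [sq] using hcoef_le i k
    have hle : ‖u i - g₀‖ ≤ Real.sqrt T :=
      Real.le_sqrt_of_sq_le hnormsq
    calc sInf ((fun g => ‖u i - g‖) '' (W : Set H)) ≤ ‖u i - g₀‖ := by
          refine csInf_le ⟨0, ?_⟩ ⟨g₀, hg₀mem, rfl⟩
          rintro x ⟨g, _, rfl⟩
          exact norm_nonneg _
      _ ≤ Real.sqrt T := hle
  -- sup bound
  have hsup : sSup ((fun f => sInf ((fun g => ‖f - g‖) '' (W : Set H))) '' Set.range u)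
      ≤ Real.sqrt T := by
    refine Real.sSup_le ?_ (Real.sqrt_nonneg T)
    rintro _ ⟨f, ⟨i, rfl⟩, rfl⟩
    exact hper i
  have hfinal : kolWidth (Set.range u) N ≤ Real.sqrt T := hkolW.trans hsup
  calc kolWidth (Set.range u) N ^ 2 ≤ Real.sqrt T ^ 2 :=
        pow_le_pow_left₀ hkol0 hfinal 2
    _ = T := Real.sq_sqrt hT0
end
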